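/- Let ℋ be a finite-dimensional complex Hilbert space. The mapping ρ ↦ GAP(ρ) is continuous from density matrices to probability measures on 𝕊(ℋ) with the weak topology: if ρ_n is a density matrix on ℋ for every n ∈ ℕ and ρ_n → ρ, then GAP(ρ_n) converges weakly to GAP(ρ), i.e., ∫ f dGAP(ρ_n) → ∫ f dGAP(ρ) for every bounded continuous f : 𝕊(ℋ) → ℝ. -/

import Mathlib

open MeasureTheory Matrix
open scoped ENNReal ComplexConjugate ComplexOrder Classical

noncomputable section

namespace GAPPaper

/-- `d`-dimensional complex Hilbert space. -/
abbrev Hsp (d : ℕ) : Type := EuclideanSpace ℂ (Fin d)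

/-- The Hilbert space `ℋ₁ ⊗ ℋ₂`. -/
abbrev Hsp2 (d₁ d₂ : ℕ) : Type := EuclideanSpace ℂ (Fin d₁ × Fin d₂)

instance (ι : Type*) : MeasurableSpace (EuclideanSpace ℂ ι) :=
  MeasurableSpace.comap (@WithLp.ofLp 2 (ι → ℂ)) MeasurableSpace.pi

instance (m n : Type*) (α : Type*) [MeasurableSpace α] : MeasurableSpace (Matrix m n α) :=
  MeasurableSpace.pi

/-- the square root of a positive semidefinite matrix (the former `Matrix.PosSemidef.sqrt`). -/
def posSemidefSqrt {n : Type*} [Fintype n] [DecidableEq n] {A : Matrix n n ℂ}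
    (hA : A.PosSemidef) : Matrix n n ℂ :=
  hA.1.eigenvectorUnitary.1 * diagonal ((↑) ∘ (√·) ∘ hA.1.eigenvalues) *
    (star hA.1.eigenvectorUnitary : Matrix n n ℂ)

/-- standard complex Gaussian on ℂ: mean 0, `E|z|² = 1`
(real and imaginary part independent real Gaussians of variance 1/2). -/
def stdCGaussian : Measure ℂ :=
  Measure.map (fun p : ℝ × ℝ => (p.1 : ℂ) + p.2 * Complex.I)
    ((ProbabilityTheory.gaussianReal 0 (1/2)).prod (ProbabilityTheory.gaussianReal 0 (1/2)))

/-- standard complex Gaussian on `EuclideanSpace ℂ ι` (covariance = identity). -/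
def stdGaussian (ι : Type*) [Fintype ι] : Measure (EuclideanSpace ℂ ι) :=
  Measure.map (⇑(WithLp.equiv 2 (ι → ℂ)).symm)
    (Measure.pi fun _ : ι => stdCGaussian)

/-- The Gaussian measure `G(ρ)` on `ℂ^d` with mean 0 and covariance `ρ`
(the image of the standard Gaussian under `√ρ`). -/
def gaussian {d : ℕ} (ρ : Matrix (Fin d) (Fin d) ℂ) : Measure (Hsp d) :=
  if h : ρ.PosSemidef then
    Measure.map
      (fun x => (WithLp.equiv 2 (Fin d → ℂ)).symm
        ((posSemidefSqrt h).mulVec (WithLp.equiv 2 (Fin d → ℂ) x)))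
      (stdGaussian (Fin d))
  else 0

/-- the "adjust" operation `Aμ(dψ) = ‖ψ‖² μ(dψ)`. -/
def adjust {E : Type*} [NormedAddCommGroup E] [MeasurableSpace E] (μ : Measure E) :
    Measure E :=
  μ.withDensity fun ψ => ENNReal.ofReal (‖ψ‖ ^ 2)

/-- projection to the unit sphere, `P(ψ) = ψ/‖ψ‖` (defined as `0` at `0`). -/
def nrm {E : Type*} [NormedAddCommGroup E] [NormedSpace ℝ E] (ψ : E) : E := ‖ψ‖⁻¹ • ψ

/-- the measure `GAP(ρ) = P_*(A G(ρ))`. -/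
def GAPm {d : ℕ} (ρ : Matrix (Fin d) (Fin d) ℂ) : Measure (Hsp d) :=
  Measure.map nrm (adjust (gaussian ρ))

/-- partial inner product `⟨χ|ψ⟩ ∈ ℋ₁`, for `χ ∈ ℋ₂`, `ψ ∈ ℋ₁⊗ℋ₂`. -/
def partialInner {d₁ d₂ : ℕ} (χ : Hsp d₂) (ψ : Hsp2 d₁ d₂) : Hsp d₁ :=
  (WithLp.equiv 2 (Fin d₁ → ℂ)).symm fun i =>
    ∑ k : Fin d₂, conj (WithLp.equiv 2 (Fin d₂ → ℂ) χ k) *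
      WithLp.equiv 2 (Fin d₁ × Fin d₂ → ℂ) ψ (i, k)

/-- the distribution `μ₁^{ψ,b} = ∑_j ‖⟨b_j|ψ⟩‖² δ_{⟨b_j|ψ⟩/‖⟨b_j|ψ⟩‖}`
of the conditional wave function (a measure concentrated on `𝕊(ℋ₁)`). -/
def condMeasure {d₁ d₂ : ℕ} (ψ : Hsp2 d₁ d₂) (b : Fin d₂ → Hsp d₂) :
    Measure (Hsp d₁) :=
  ∑ j : Fin d₂, ((‖partialInner (b j) ψ‖₊ : ℝ≥0∞) ^ 2) •
    Measure.dirac (nrm (partialInner (b j) ψ))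

/-- the distribution `μ̃₁^{ψ,b} = (1/d₂) ∑_j δ_{√d₂ ⟨b_j|ψ⟩}` of the non-normalized
conditional wave function `√d₂ ⟨b_J|ψ⟩`, `J` uniform in `{1,…,d₂}`. -/
def tildeMu {d₁ d₂ : ℕ} (ψ : Hsp2 d₁ d₂) (b : Fin d₂ → Hsp d₂) :
    Measure (Hsp d₁) :=
  ((d₂ : ℝ≥0∞))⁻¹ • ∑ j : Fin d₂, Measure.dirac (Real.sqrt d₂ • partialInner (b j) ψ)

/-- the reduced density matrix `ρ₁^ψ = tr₂ |ψ⟩⟨ψ|`. -/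
def redMatrix {d₁ d₂ : ℕ} (ψ : Hsp2 d₁ d₂) : Matrix (Fin d₁) (Fin d₁) ℂ :=
  Matrix.of fun i i' =>
    ∑ k : Fin d₂, WithLp.equiv 2 (Fin d₁ × Fin d₂ → ℂ) ψ (i, k) *
      conj (WithLp.equiv 2 (Fin d₁ × Fin d₂ → ℂ) ψ (i', k))

/-- sup norm `‖f‖_∞` of a function viewed as a function on the unit sphere `𝕊(ℋ)`. -/
def sphereSup {d : ℕ} (f : Hsp d → ℝ) : ℝ :=
  ⨆ ψ : Metric.sphere (0 : Hsp d) 1, |f ψ|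

/-- sup norm `‖f‖_∞` over the whole space. -/
def supNorm {α : Type*} (f : α → ℝ) : ℝ := ⨆ x, |f x|

/-- the trace norm `‖M‖_tr = tr √(M^* M)`. -/
def traceNorm {n : Type*} [Fintype n] [DecidableEq n] (M : Matrix n n ℂ) : ℝ :=
  (posSemidefSqrt (Matrix.posSemidef_conjTranspose_mul_self M)).trace.re

/-- partial trace over the second factor. -/
def ptrace {d₁ d₂ : ℕ} (M : Matrix (Fin d₁ × Fin d₂) (Fin d₁ × Fin d₂) ℂ) :
    Matrix (Fin d₁) (Fin d₁) ℂ :=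
  Matrix.of fun i i' => ∑ k : Fin d₂, M (i, k) (i', k)

/-- the matrix of the orthogonal projection onto a subspace `K`. -/
def projMatrix {ι : Type*} [Fintype ι] [DecidableEq ι]
    (K : Submodule ℂ (EuclideanSpace ℂ ι)) : Matrix ι ι ℂ :=
  Matrix.of fun i j =>
    (inner ℂ (EuclideanSpace.single i (1:ℂ))
      ((Submodule.orthogonalProjectionOnto K (EuclideanSpace.single j (1:ℂ)) : EuclideanSpace ℂ ι)) : ℂ)

/-- the micro-canonical density matrix `ρ_R`: `1/dim K` times the projection onto `K`. -/
def rhoR {ι : Type*} [Fintype ι] [DecidableEq ι]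
    (K : Submodule ℂ (EuclideanSpace ℂ ι)) : Matrix ι ι ℂ :=
  ((Module.finrank ℂ K : ℂ))⁻¹ • projMatrix K

/-- the normalized uniform measure `u_R` on the unit sphere of the subspace `K`
(realized as a measure on the ambient space, concentrated on `𝕊(K)`:
the image of a standard Gaussian under `x ↦ P_K x/‖P_K x‖`). -/
def uR {ι : Type*} [Fintype ι] (K : Submodule ℂ (EuclideanSpace ℂ ι)) :
    Measure (EuclideanSpace ℂ ι) :=
  Measure.map (fun x => nrm ((Submodule.orthogonalProjectionOnto K x : EuclideanSpace ℂ ι)))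
    (stdGaussian ι)

/-- the normalized uniform measure on the unit sphere `𝕊(ℂ^d)`. -/
def sphereUniform (d : ℕ) : Measure (Hsp d) :=
  Measure.map nrm (stdGaussian (Fin d))

/-- the unitary group `U(n)`. -/
abbrev UG (n : ℕ) : Type := Matrix.unitaryGroup (Fin n) ℂ

/-- `μU` is the Haar (probability) measure on the compact Polish group `U(n)`:
a left-invariant Borel probability measure (this characterizes Haar measure uniquely). -/
def IsHaar {n : ℕ} (μU : Measure (UG n)) : Prop :=
  IsProbabilityMeasure μU ∧ ∀ V : UG n, Measure.map (fun U => V * U) μU = μU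

/-- the `j`-th column of a unitary matrix, as a vector in `ℂ^n`. -/
def col {n : ℕ} (U : UG n) (j : Fin n) : Hsp n :=
  (WithLp.equiv 2 (Fin n → ℂ)).symm fun k => (U : Matrix (Fin n) (Fin n) ℂ) k j

/-- the orthonormal basis of `ℂ^n` formed by the columns of a unitary matrix; pushing
Haar measure forward along this map yields the uniform measure `u_ONB` on `ONB(ℋ₂)`. -/
def colBasis {n : ℕ} (U : UG n) : Fin n → Hsp n := fun j => col U j

/-- elementary tensor `x ⊗ y ∈ ℋ₁⊗ℋ₂`. -/
def tensor {d₁ d₂ : ℕ} (x : Hsp d₁) (y : Hsp d₂) : Hsp2 d₁ d₂ :=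
  (WithLp.equiv 2 (Fin d₁ × Fin d₂ → ℂ)).symm fun p =>
    WithLp.equiv 2 (Fin d₁ → ℂ) x p.1 * WithLp.equiv 2 (Fin d₂ → ℂ) y p.2

/-- the set `ℛ(ρ₁)` of unit vectors in `ℋ₁⊗ℋ₂` with reduced density matrix `ρ₁`. -/
def Rset (d₁ d₂ : ℕ) (ρ₁ : Matrix (Fin d₁) (Fin d₁) ℂ) : Set (Hsp2 d₁ d₂) :=
  {ψ | ‖ψ‖ = 1 ∧ redMatrix ψ = ρ₁}

/-- the uniform distribution `u_{ρ₁}` on `ℛ(ρ₁)`: the image, under the map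
`{φ_i} ↦ ∑_i √p_i χ_i ⊗ φ_i` (with `{χ_i}` an eigenbasis of `ρ₁`, `p_i` the eigenvalues,
and `{φ_i}` the first `d₁` columns of a Haar-distributed unitary `U`), of Haar measure `μU`. -/
def uRho {d₁ d₂ : ℕ} (ρ₁ : Matrix (Fin d₁) (Fin d₁) ℂ) (μU : Measure (UG d₂)) :
    Measure (Hsp2 d₁ d₂) :=
  if h : ρ₁.IsHermitian ∧ d₁ ≤ d₂ then
    Measure.map (fun U : UG d₂ =>
      ∑ i : Fin d₁, Real.sqrt (h.1.eigenvalues i) •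
        tensor (h.1.eigenvectorBasis i) (col U (Fin.castLE h.2 i))) μU
  else 0

/-- `ρ` is a density matrix: positive semidefinite with trace 1. -/
def IsDensityMatrix {d : ℕ} (ρ : Matrix (Fin d) (Fin d) ℂ) : Prop :=
  ρ.PosSemidef ∧ ρ.trace = 1

/-- the property of the threshold `D₂ = D₂(ε,δ,d₁)` asserted by Theorem 1:
for all `d₂ > D₂`, every orthonormal basis `b` of `ℋ₂`, every density matrix `ρ₁`
on `ℋ₁` and every bounded measurable `f : 𝕊(ℋ₁) → ℝ`,
`u_{ρ₁} {ψ ∈ ℛ(ρ₁) : |μ₁^{ψ,b}(f) − GAP(ρ₁)(f)| < ε ‖f‖_∞} ≥ 1 − δ`. -/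
def Thm1Prop (ε δ : ℝ) (d₁ : ℕ) (D₂ : ℝ) : Prop :=
  ∀ d₂ : ℕ, D₂ < (d₂ : ℝ) →
  ∀ b : Fin d₂ → Hsp d₂, Orthonormal ℂ b →
  ∀ ρ₁ : Matrix (Fin d₁) (Fin d₁) ℂ, IsDensityMatrix ρ₁ →
  ∀ f : Hsp d₁ → ℝ, Measurable f →
    (∃ C : ℝ, ∀ ψ ∈ Metric.sphere (0 : Hsp d₁) 1, |f ψ| ≤ C) →
  ∀ μU : Measure (UG d₂), IsHaar μU →
  ENNReal.ofReal (1 - δ) ≤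
    uRho ρ₁ μU {ψ | ψ ∈ Rset d₁ d₂ ρ₁ ∧
      |(∫ x, f x ∂condMeasure ψ b) - ∫ x, f x ∂GAPm ρ₁| < ε * sphereSup f}


/-! ### Compatibility: the square root of a PSD matrix via `posSemidefSqrt` -/

/-- the square root `posSemidefSqrt hA`, under its former name. -/
abbrev _root_.Matrix.PosSemidef.sqrt {n : Type*} [Fintype n] [DecidableEq n] {A : Matrix n n ℂ}
    (hA : A.PosSemidef) : Matrix n n ℂ := posSemidefSqrt hA

open scoped MatrixOrder in
lemma posSemidefSqrt_eq_cfc {n : Type*} [Fintype n] [DecidableEq n] {A : Matrix n n ℂ}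
    (hA : A.PosSemidef) : posSemidefSqrt hA = CFC.sqrt A := by
  rw [CFC.sqrt_eq_cfc, cfc_nnreal_eq_real _ A hA.nonneg, hA.1.cfc_eq]
  simp only [IsHermitian.cfc, Unitary.conjStarAlgAut_apply, posSemidefSqrt]
  congr 3
  funext i
  simp [Real.coe_sqrt, Real.coe_toNNReal', max_eq_left (hA.eigenvalues_nonneg i)]

open scoped MatrixOrder in
lemma _root_.Matrix.PosSemidef.posSemidef_sqrt {n : Type*} [Fintype n] [DecidableEq n]
    {A : Matrix n n ℂ} (hA : A.PosSemidef) : hA.sqrt.PosSemidef := by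
  rw [Matrix.PosSemidef.sqrt, posSemidefSqrt_eq_cfc]
  exact Matrix.nonneg_iff_posSemidef.mp (CFC.sqrt_nonneg A)

open scoped MatrixOrder in
lemma _root_.Matrix.PosSemidef.sqrt_mul_self {n : Type*} [Fintype n] [DecidableEq n]
    {A : Matrix n n ℂ} (hA : A.PosSemidef) : hA.sqrt * hA.sqrt = A := by
  rw [Matrix.PosSemidef.sqrt, posSemidefSqrt_eq_cfc]
  exact CFC.sqrt_mul_sqrt_self A hA.nonneg

open scoped MatrixOrder in
lemma _root_.Matrix.PosSemidef.eq_sqrt_of_sq_eq {n : Type*} [Fintype n] [DecidableEq n]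
    {A B : Matrix n n ℂ} (hB : B.PosSemidef) (hA : A.PosSemidef) (h : B ^ 2 = A) :
    B = hA.sqrt := by
  rw [Matrix.PosSemidef.sqrt, posSemidefSqrt_eq_cfc]
  exact (CFC.sqrt_unique (by rw [← pow_two, h]) hB.nonneg).symm

/-! ### Auxiliary material for the proof of `GAP_weak_continuity` -/

instance (ι : Type*) [Finite ι] : BorelSpace (EuclideanSpace ℂ ι) :=
  ⟨(PiLp.borelSpace (X := fun _ : ι => ℂ) 2).measurable_eq⟩

lemma stdGaussian_eq (ι : Type*) [Fintype ι] :
    stdGaussian ι = (Measure.pi fun _ : ι => stdCGaussian).map (WithLp.toLp 2) := by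
  rfl

lemma measurable_addMulI : Measurable (fun p : ℝ × ℝ => (p.1 : ℂ) + p.2 * Complex.I) := by
  fun_prop

instance : IsProbabilityMeasure stdCGaussian :=
  Measure.isProbabilityMeasure_map measurable_addMulI.aemeasurable

lemma map_eval_pi {ι : Type*} [Fintype ι] [DecidableEq ι] {α : Type*} [MeasurableSpace α]
    (μ : Measure α) [IsProbabilityMeasure μ] (i : ι) :
    (Measure.pi fun _ : ι => μ).map (Function.eval i) = μ := by
  ext s hs
  rw [Measure.map_apply (measurable_pi_apply i) hs, Set.eval_preimage, Measure.pi_pi]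
  rw [Fintype.prod_eq_single i (fun j hj => by simp [Function.update_of_ne hj])]
  simp

lemma integrable_sq_gauss : Integrable (fun x : ℝ => x ^ 2)
    (ProbabilityTheory.gaussianReal 0 (1/2)) := by
  have hv : (1/2 : NNReal) ≠ 0 := by norm_num
  rw [ProbabilityTheory.gaussianReal_of_var_ne_zero 0 hv]
  rw [integrable_withDensity_iff (ProbabilityTheory.measurable_gaussianPDF 0 (1/2))
    (Filter.Eventually.of_forall fun x => ENNReal.ofReal_lt_top)]
  have h := integrable_rpow_mul_exp_neg_mul_sq (b := 1) one_pos (s := 2) (by norm_num)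
  have h2 := (h.const_mul ((Real.sqrt (2 * Real.pi * ((1/2 : NNReal) : ℝ)))⁻¹))
  refine h2.congr (Filter.Eventually.of_forall fun x => ?_)
  have hx : x ^ (2:ℝ) = x ^ 2 := by
    rw [show (2:ℝ) = ((2:ℕ):ℝ) by norm_num, Real.rpow_natCast]
  simp only [ProbabilityTheory.gaussianPDF, ProbabilityTheory.gaussianPDFReal]
  rw [hx]
  have hc : ((1/2 : NNReal) : ℝ) = 1/2 := by norm_num
  rw [hc]
  ring_nf
  rw [ENNReal.toReal_ofReal (by positivity)]
  ring

lemma integrable_normSq_stdC : Integrable (fun z : ℂ => ‖z‖ ^ 2) stdCGaussian := by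
  rw [stdCGaussian]
  rw [integrable_map_measure (g := fun z : ℂ => ‖z‖ ^ 2)
    ((continuous_norm.pow 2).aestronglyMeasurable) measurable_addMulI.aemeasurable]
  have key : ∀ p : ℝ × ℝ,
      ((fun z : ℂ => ‖z‖ ^ 2) ∘ fun p : ℝ × ℝ => (p.1 : ℂ) + p.2 * Complex.I) p
      = p.1 ^ 2 + p.2 ^ 2 := by
    intro p
    simp only [Function.comp_apply, Complex.sq_norm,
      Complex.normSq_add_mul_I]
  set P := ProbabilityTheory.gaussianReal 0 (1/2) with hP
  have hmapf : (P.prod P).map Prod.fst = P := Measure.fst_prod (μ := P) (ν := P)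
  have hmaps : (P.prod P).map Prod.snd = P := Measure.snd_prod (μ := P) (ν := P)
  have h1 : Integrable (fun p : ℝ × ℝ => p.1 ^ 2) (P.prod P) :=
    (integrable_map_measure ((continuous_pow 2).aestronglyMeasurable)
      measurable_fst.aemeasurable).mp (by rw [hmapf]; exact integrable_sq_gauss)
  have h2 : Integrable (fun p : ℝ × ℝ => p.2 ^ 2) (P.prod P) :=
    (integrable_map_measure ((continuous_pow 2).aestronglyMeasurable)
      measurable_snd.aemeasurable).mp (by rw [hmaps]; exact integrable_sq_gauss)
  exact (h1.add h2).congr (Filter.Eventually.of_forall fun p => (key p).symm)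

lemma integrable_sq_norm_stdGaussian (d : ℕ) :
    Integrable (fun x : Hsp d => ‖x‖ ^ 2) (stdGaussian (Fin d)) := by
  rw [stdGaussian_eq]
  rw [integrable_map_measure (g := fun x : Hsp d => ‖x‖ ^ 2)
    ((continuous_norm.pow 2).aestronglyMeasurable) (WithLp.measurable_toLp 2 _).aemeasurable]
  have hcoord : ∀ i : Fin d, Integrable (fun x : Fin d → ℂ => ‖x i‖ ^ 2)
      (Measure.pi fun _ : Fin d => stdCGaussian) := by
    intro i
    have hmap := map_eval_pi (ι := Fin d) stdCGaussian i
    exact (integrable_map_measure ((continuous_norm.pow 2).aestronglyMeasurable)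
      (measurable_pi_apply i).aemeasurable).mp (by rw [hmap]; exact integrable_normSq_stdC)
  have hsum := integrable_finset_sum (μ := Measure.pi fun _ : Fin d => stdCGaussian)
    Finset.univ (fun i _ => hcoord i)
  have hsum' : Integrable (fun x : Fin d → ℂ => ∑ i : Fin d, ‖x i‖ ^ 2)
      (Measure.pi fun _ : Fin d => stdCGaussian) := hsum
  refine hsum'.congr (Filter.Eventually.of_forall fun x => ?_)
  show (∑ i : Fin d, ‖x i‖ ^ 2) = ‖(WithLp.toLp 2 x : Hsp d)‖ ^ 2
  rw [EuclideanSpace.norm_eq, Real.sq_sqrt (Finset.sum_nonneg fun i _ => sq_nonneg _)]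

/-- the linear map `x ↦ M x` on `ℂ^d`, written with the `WithLp` equivalences. -/
def mv {d : ℕ} (M : Matrix (Fin d) (Fin d) ℂ) (x : Hsp d) : Hsp d :=
  (WithLp.equiv 2 (Fin d → ℂ)).symm (M.mulVec (WithLp.equiv 2 (Fin d → ℂ) x))

lemma continuous_mv_matrix {d : ℕ} (x : Hsp d) :
    Continuous fun M : Matrix (Fin d) (Fin d) ℂ => mv M x :=
  (PiLp.continuous_toLp 2 fun _ : Fin d => ℂ).comp
    (continuous_id.matrix_mulVec continuous_const)

lemma continuous_mv {d : ℕ} (M : Matrix (Fin d) (Fin d) ℂ) : Continuous (mv M) :=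
  (PiLp.continuous_toLp 2 fun _ : Fin d => ℂ).comp
    ((continuous_const.matrix_mulVec ((PiLp.continuous_ofLp 2 fun _ : Fin d => ℂ))))

lemma measurable_nrm {d : ℕ} : Measurable (nrm : Hsp d → Hsp d) := by
  unfold nrm
  exact (measurable_norm.inv).smul measurable_id

lemma coord_le_norm {d : ℕ} (x : Hsp d) (j : Fin d) : ‖x j‖ ≤ ‖x‖ := by
  rw [EuclideanSpace.norm_eq x]
  have h1 : ‖x j‖ ^ 2 ≤ ∑ i : Fin d, ‖x i‖ ^ 2 :=
    Finset.single_le_sum (f := fun i : Fin d => ‖x i‖ ^ 2) (fun i _ => sq_nonneg _)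
      (Finset.mem_univ j)
  nlinarith [Real.sq_sqrt (Finset.sum_nonneg fun i (_ : i ∈ Finset.univ) =>
    sq_nonneg (‖x i‖)), Real.sqrt_nonneg (∑ i : Fin d, ‖x i‖ ^ 2), norm_nonneg (x j)]

lemma mv_sq_norm_le {d : ℕ} {M : Matrix (Fin d) (Fin d) ℂ} {R : ℝ} (hR : 0 ≤ R)
    (hM : ∀ i j, ‖M i j‖ ≤ R) (x : Hsp d) :
    ‖mv M x‖ ^ 2 ≤ (d : ℝ) ^ 3 * R ^ 2 * ‖x‖ ^ 2 := by
  have hcoordbd : ∀ i : Fin d, ‖(mv M x) i‖ ≤ (d : ℝ) * R * ‖x‖ := by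
    intro i
    have : (mv M x) i = ∑ j : Fin d, M i j * x j := rfl
    rw [this]
    calc ‖∑ j : Fin d, M i j * x j‖ ≤ ∑ j : Fin d, ‖M i j * x j‖ := norm_sum_le _ _
      _ ≤ ∑ _j : Fin d, R * ‖x‖ := by
          refine Finset.sum_le_sum fun j _ => ?_
          rw [norm_mul]
          exact mul_le_mul (hM i j) (coord_le_norm x j) (norm_nonneg _) hR
      _ = (d : ℝ) * R * ‖x‖ := by
          rw [Finset.sum_const, Finset.card_univ, Fintype.card_fin]
          ring
  have hnorm : ‖mv M x‖ ^ 2 = ∑ i : Fin d, ‖(mv M x) i‖ ^ 2 := by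
    rw [EuclideanSpace.norm_eq (mv M x),
      Real.sq_sqrt (Finset.sum_nonneg fun i _ => sq_nonneg _)]
  rw [hnorm]
  calc ∑ i : Fin d, ‖(mv M x) i‖ ^ 2 ≤ ∑ _i : Fin d, ((d : ℝ) * R * ‖x‖) ^ 2 := by
        refine Finset.sum_le_sum fun i _ => ?_
        have h0 : (0:ℝ) ≤ (d : ℝ) * R * ‖x‖ := by positivity
        nlinarith [hcoordbd i, norm_nonneg ((mv M x) i)]
    _ = (d : ℝ) * ((d : ℝ) * R * ‖x‖) ^ 2 := by
        rw [Finset.sum_const, Finset.card_univ, Fintype.card_fin]; ring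
    _ = (d : ℝ) ^ 3 * R ^ 2 * ‖x‖ ^ 2 := by ring

lemma integral_GAPm_eq {d : ℕ} {ρ : Matrix (Fin d) (Fin d) ℂ} (h : ρ.PosSemidef)
    (f : Hsp d → ℝ) (hf : Continuous f) :
    ∫ x, f x ∂GAPm ρ =
      ∫ x, ‖mv h.sqrt x‖ ^ 2 * f (nrm (mv h.sqrt x)) ∂stdGaussian (Fin d) := by
  rw [GAPm, gaussian, dif_pos h]
  rw [show (fun x : Hsp d => (WithLp.equiv 2 (Fin d → ℂ)).symm
    ((posSemidefSqrt h).mulVec ((WithLp.equiv 2 (Fin d → ℂ)) x))) = mv h.sqrt from rfl]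
  rw [integral_map measurable_nrm.aemeasurable hf.aestronglyMeasurable]
  rw [adjust]
  have hdens : (fun ψ : Hsp d => ENNReal.ofReal (‖ψ‖ ^ 2))
      = fun ψ : Hsp d => ((‖ψ‖₊ ^ 2 : NNReal) : ℝ≥0∞) := by
    funext ψ
    rw [ENNReal.ofReal_pow (norm_nonneg _), ofReal_norm_eq_enorm, ENNReal.coe_pow, enorm_eq_nnnorm]
  rw [hdens]
  rw [integral_withDensity_eq_integral_smul (measurable_nnnorm.pow_const 2)
    (fun ψ => f (nrm ψ))]
  have hsmul : ∀ ψ : Hsp d, (‖ψ‖₊ ^ 2 : NNReal) • f (nrm ψ) = ‖ψ‖ ^ 2 * f (nrm ψ) := by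
    intro ψ
    rw [NNReal.smul_def, NNReal.coe_pow, coe_nnnorm, smul_eq_mul]
  rw [integral_congr_ae (Filter.Eventually.of_forall hsmul)]
  have hmeas : Measurable fun ψ : Hsp d => ‖ψ‖ ^ 2 * f (nrm ψ) :=
    (measurable_norm.pow_const 2).mul (hf.measurable.comp measurable_nrm)
  rw [integral_map (continuous_mv h.sqrt).aemeasurable hmeas.aestronglyMeasurable]

lemma sqrt_entry_le {d : ℕ} {ρ : Matrix (Fin d) (Fin d) ℂ} (h : IsDensityMatrix ρ)
    (i j : Fin d) : ‖h.1.sqrt i j‖ ≤ 1 := by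
  set B := h.1.sqrt with hB
  have hPSD : B.PosSemidef := h.1.posSemidef_sqrt
  have hmul : B * B = ρ := h.1.sqrt_mul_self
  have hsym : ∀ a b : Fin d, B a b = star (B b a) := by
    intro a b
    conv_lhs => rw [← hPSD.1]
    rw [Matrix.conjTranspose_apply]
  have hdiag : ∀ k : Fin d, (ρ k k).re = ∑ l : Fin d, ‖B k l‖ ^ 2 := by
    intro k
    have h1 : ρ k k = ∑ l : Fin d, B k l * (starRingEnd ℂ) (B k l) := by
      rw [← hmul, Matrix.mul_apply]
      refine Finset.sum_congr rfl fun l _ => ?_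
      rw [hsym l k]; rfl
    rw [h1, Complex.re_sum]
    refine Finset.sum_congr rfl fun l _ => ?_
    rw [Complex.mul_conj, Complex.normSq_eq_norm_sq, Complex.ofReal_re]
  have htr : ∑ k : Fin d, (ρ k k).re = 1 := by
    have h2 : (ρ.trace).re = 1 := by rw [h.2]; rfl
    rw [Matrix.trace] at h2
    simpa [Matrix.diag, Complex.re_sum] using h2
  have hle : (ρ i i).re ≤ 1 := by
    rw [← htr]
    refine Finset.single_le_sum (f := fun k : Fin d => (ρ k k).re) (fun k _ => ?_)
      (Finset.mem_univ i)
    show 0 ≤ (ρ k k).re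
    rw [hdiag k]
    positivity
  have hij : ‖B i j‖ ^ 2 ≤ 1 := by
    refine le_trans ?_ hle
    rw [hdiag i]
    exact Finset.single_le_sum (fun l (_ : l ∈ Finset.univ) => sq_nonneg (‖B i l‖))
      (Finset.mem_univ j)
  nlinarith [norm_nonneg (B i j)]

lemma sqrt_tendsto {d : ℕ} {ρseq : ℕ → Matrix (Fin d) (Fin d) ℂ}
    {ρ : Matrix (Fin d) (Fin d) ℂ}
    (hseq : ∀ n, IsDensityMatrix (ρseq n)) (hρ : IsDensityMatrix ρ)
    (hconv : Filter.Tendsto ρseq Filter.atTop (nhds ρ)) :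
    Filter.Tendsto (fun n => (hseq n).1.sqrt) Filter.atTop (nhds hρ.1.sqrt) := by
  apply Filter.tendsto_of_subseq_tendsto
  intro ns hns
  set x : ℕ → Matrix (Fin d) (Fin d) ℂ := fun n => (hseq n).1.sqrt with hx
  set K : Set (Matrix (Fin d) (Fin d) ℂ) :=
    Set.univ.pi fun _ : Fin d => Set.univ.pi fun _ : Fin d => Metric.closedBall (0:ℂ) 1
    with hK
  have hKc : IsCompact K :=
    isCompact_univ_pi fun _ => isCompact_univ_pi fun _ => isCompact_closedBall 0 1
  have hmem : ∀ n, x (ns n) ∈ K := by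
    intro n
    rw [hK]
    intro i _
    intro j _
    rw [Metric.mem_closedBall, dist_zero_right]
    exact sqrt_entry_le (hseq (ns n)) i j
  haveI : FirstCountableTopology (Matrix (Fin d) (Fin d) ℂ) :=
    inferInstanceAs (FirstCountableTopology (Fin d → Fin d → ℂ))
  obtain ⟨b, _hbK, φ, hφmono, hφtend⟩ := hKc.tendsto_subseq hmem
  refine ⟨φ, ?_⟩
  have hρc : Filter.Tendsto (fun n => ρseq (ns (φ n))) Filter.atTop (nhds ρ) :=
    hconv.comp (hns.comp hφmono.tendsto_atTop)
  have hsq : ∀ n, x (ns (φ n)) * x (ns (φ n)) = ρseq (ns (φ n)) := fun n =>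
    (hseq (ns (φ n))).1.sqrt_mul_self
  have hbb : b * b = ρ := by
    refine tendsto_nhds_unique ?_ hρc
    have := hφtend.mul hφtend
    exact this.congr fun n => (hsq n)
  have hbH : b.IsHermitian := by
    have h1 : Filter.Tendsto (fun n => ((x ∘ ns ∘ φ) n)ᴴ) Filter.atTop (nhds bᴴ) :=
      ((Continuous.matrix_conjTranspose continuous_id).tendsto b).comp hφtend
    have h2 : ∀ n, ((x ∘ ns ∘ φ) n)ᴴ = (x ∘ ns ∘ φ) n := fun n =>
      ((hseq (ns (φ n))).1.posSemidef_sqrt).1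
    exact tendsto_nhds_unique (h1.congr h2) hφtend
  have hbPSD : b.PosSemidef := by
    refine Matrix.PosSemidef.of_dotProduct_mulVec_nonneg hbH fun v => ?_
    have hc : Continuous fun M : Matrix (Fin d) (Fin d) ℂ =>
        dotProduct (star v) (M.mulVec v) :=
      continuous_const.dotProduct (continuous_id.matrix_mulVec continuous_const)
    have h1 : Filter.Tendsto (fun n => dotProduct (star v)
        (((x ∘ ns ∘ φ) n).mulVec v)) Filter.atTop
        (nhds (dotProduct (star v) (b.mulVec v))) := (hc.tendsto b).comp hφtend
    have h2 : ∀ n, 0 ≤ dotProduct (star v) (((x ∘ ns ∘ φ) n).mulVec v) := fun n =>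
      ((hseq (ns (φ n))).1.posSemidef_sqrt).dotProduct_mulVec_nonneg v
    rw [Complex.le_def]
    constructor
    · have hre := (Complex.continuous_re.tendsto _).comp h1
      have : ∀ n, (0:ℝ) ≤ (dotProduct (star v) (((x ∘ ns ∘ φ) n).mulVec v)).re := by
        intro n
        have := (Complex.le_def.mp (h2 n)).1
        simpa using this
      have hge := ge_of_tendsto hre (Filter.Eventually.of_forall this)
      simpa using hge
    · have him := (Complex.continuous_im.tendsto _).comp h1
      have h0 : ∀ n, (dotProduct (star v) (((x ∘ ns ∘ φ) n).mulVec v)).im = 0 := by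
        intro n
        exact ((Complex.le_def.mp (h2 n)).2).symm
      have : Filter.Tendsto (fun _ : ℕ => (0:ℝ)) Filter.atTop
          (nhds ((dotProduct (star v) (b.mulVec v)).im)) := by
        refine him.congr fun n => h0 n
      have := tendsto_nhds_unique this tendsto_const_nhds
      simp [this]
  have hb_eq : b = hρ.1.sqrt := hbPSD.eq_sqrt_of_sq_eq hρ.1 (by rw [pow_two, hbb])
  rw [← hb_eq]
  exact hφtend

/-- **Lemma** (weak continuity of `ρ ↦ GAP(ρ)`): if density matrices `ρ_n → ρ` on a
finite-dimensional Hilbert space then `GAP(ρ_n) ⇒ GAP(ρ)` weakly, i.e.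
`∫ f dGAP(ρ_n) → ∫ f dGAP(ρ)` for every bounded continuous `f : 𝕊(ℋ) → ℝ`. -/
theorem GAP_weak_continuity (d : ℕ) (ρseq : ℕ → Matrix (Fin d) (Fin d) ℂ)
    (ρ : Matrix (Fin d) (Fin d) ℂ)
    (hseq : ∀ n, IsDensityMatrix (ρseq n)) (hρ : IsDensityMatrix ρ)
    (hconv : Filter.Tendsto ρseq Filter.atTop (nhds ρ)) :
    ∀ f : Hsp d → ℝ, Continuous f → (∃ C : ℝ, ∀ x, |f x| ≤ C) →
      Filter.Tendsto (fun n => ∫ x, f x ∂GAPm (ρseq n)) Filter.atTop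
        (nhds (∫ x, f x ∂GAPm ρ)) := by
  intro f hf hbd
  obtain ⟨C, hC⟩ := hbd
  have hC0 : 0 ≤ C := le_trans (abs_nonneg _) (hC 0)
  set S : ℕ → Matrix (Fin d) (Fin d) ℂ := fun n => (hseq n).1.sqrt with hSdef
  have hS : Filter.Tendsto S Filter.atTop (nhds hρ.1.sqrt) := sqrt_tendsto hseq hρ hconv
  have h1 : ∀ n, ∫ x, f x ∂GAPm (ρseq n)
      = ∫ x, ‖mv (S n) x‖ ^ 2 * f (nrm (mv (S n) x)) ∂stdGaussian (Fin d) := fun n =>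
    integral_GAPm_eq (hseq n).1 f hf
  rw [integral_GAPm_eq hρ.1 f hf]
  refine Filter.Tendsto.congr (fun n => (h1 n).symm) ?_
  refine tendsto_integral_of_dominated_convergence
    (fun x => C * ((d : ℝ) ^ 3 * ‖x‖ ^ 2)) (fun n => ?_) ?_ (fun n => ?_) ?_
  · exact (((continuous_mv (S n)).norm.pow 2).measurable.mul
      (hf.measurable.comp (measurable_nrm.comp (continuous_mv (S n)).measurable))).aestronglyMeasurable
  · exact ((integrable_sq_norm_stdGaussian d).const_mul ((d : ℝ) ^ 3)).const_mul C
  · refine Filter.Eventually.of_forall fun x => ?_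
    have hmv : ‖mv (S n) x‖ ^ 2 ≤ (d : ℝ) ^ 3 * 1 ^ 2 * ‖x‖ ^ 2 :=
      mv_sq_norm_le zero_le_one (fun i j => sqrt_entry_le (hseq n) i j) x
    have hfb : |f (nrm (mv (S n) x))| ≤ C := hC _
    rw [Real.norm_eq_abs, abs_mul, abs_of_nonneg (sq_nonneg (‖mv (S n) x‖))]
    calc ‖mv (S n) x‖ ^ 2 * |f (nrm (mv (S n) x))| ≤ ((d : ℝ) ^ 3 * 1 ^ 2 * ‖x‖ ^ 2) * C := by
          refine mul_le_mul (by simpa using hmv) hfb (abs_nonneg _) (by positivity)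
      _ = C * ((d : ℝ) ^ 3 * ‖x‖ ^ 2) := by ring
  · refine Filter.Eventually.of_forall fun x => ?_
    by_cases hx : mv hρ.1.sqrt x = 0
    · have hzero : ‖mv hρ.1.sqrt x‖ ^ 2 * f (nrm (mv hρ.1.sqrt x)) = 0 := by
        rw [hx]; simp
      rw [hzero]
      refine squeeze_zero_norm (a := fun n => C * ‖mv (S n) x‖ ^ 2) (fun n => ?_) ?_
      · rw [Real.norm_eq_abs, abs_mul, abs_of_nonneg (sq_nonneg (‖mv (S n) x‖))]
        calc ‖mv (S n) x‖ ^ 2 * |f (nrm (mv (S n) x))| ≤ ‖mv (S n) x‖ ^ 2 * C :=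
              mul_le_mul_of_nonneg_left (hC _) (sq_nonneg _)
          _ = C * ‖mv (S n) x‖ ^ 2 := by ring
      · have hcont : Continuous fun M : Matrix (Fin d) (Fin d) ℂ => C * ‖mv M x‖ ^ 2 :=
          continuous_const.mul ((continuous_mv_matrix x).norm.pow 2)
        have := (hcont.tendsto hρ.1.sqrt).comp hS
        simpa [hx, Function.comp_def] using this
    · have hmvc : Continuous fun M : Matrix (Fin d) (Fin d) ℂ => mv M x :=
        continuous_mv_matrix x
      have hnrmc : ContinuousAt (nrm : Hsp d → Hsp d) (mv hρ.1.sqrt x) := by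
        unfold nrm
        exact ((continuous_norm.continuousAt.inv₀
          (norm_ne_zero_iff.mpr hx)).smul continuousAt_id)
      have hcont : ContinuousAt
          (fun M : Matrix (Fin d) (Fin d) ℂ => ‖mv M x‖ ^ 2 * f (nrm (mv M x)))
          hρ.1.sqrt := by
        refine ContinuousAt.mul ((hmvc.norm.pow 2).continuousAt) ?_
        have h2 : ContinuousAt (fun t : Hsp d => f (nrm t)) (mv hρ.1.sqrt x) :=
          hf.continuousAt.comp hnrmc
        exact ContinuousAt.comp (g := fun t : Hsp d => f (nrm t))
          (f := fun M : Matrix (Fin d) (Fin d) ℂ => mv M x) h2 hmvc.continuousAt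
      exact hcont.tendsto.comp hS


end GAPPaper
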